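/- Evaluation of expressions in safe-equivalent bindings yields safe-equivalent results: for the expression language with constants, variables, and binary operations whose taint is the lub of the operand taints, if B ≈ B' and B evaluates e to (v, σ) and B' evaluates e to (v', σ'), then (v, σ) ≈ (v', σ'). -/

import Mathlib

/-- Taints: S (safe) and U (unsafe). -/
inductive Taint | S | U
deriving DecidableEq

/-- Least upper bound of taints: S ⊔ S = S, otherwise U. -/
def Taint.lub : Taint → Taint → Taint
  | .S, .S => .S
  | _, _ => .U

/-- Tainted values. -/
abbrev TVal := ℕ × Taint

/-- Bindings from variable names to tainted values. -/
abbrev Bnd := String → Option TVal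

/-- Expressions: constants, variables, and binary operations. -/
inductive Expr
  | const (n : ℕ)
  | var (x : String)
  | op (f : ℕ → ℕ → ℕ) (e1 e2 : Expr)

/-- Tainted big-step evaluation of expressions: constants are safe, variables
take their binding, binary operations combine taints with the lub. -/
inductive Eval (B : Bnd) : Expr → TVal → Prop
  | const (n : ℕ) : Eval B (.const n) (n, Taint.S)
  | var (x : String) (p : TVal) : B x = some p → Eval B (.var x) p
  | op (f : ℕ → ℕ → ℕ) (e1 e2 : Expr) (v1 v2 : ℕ) (σ1 σ2 : Taint) :
      Eval B e1 (v1, σ1) → Eval B e2 (v2, σ2) →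
      Eval B (.op f e1 e2) (f v1 v2, σ1.lub σ2)

/-- Safe-equivalence of tainted values. -/
def VEq (p q : TVal) : Prop :=
  p.2 = q.2 ∧ (p.2 = Taint.S → p.1 = q.1)

/-- Safe-equivalence of bindings: same domain, safe-equivalent values. -/
def BEq' (B B' : Bnd) : Prop :=
  (∀ x, (B x).isSome ↔ (B' x).isSome) ∧
  (∀ x p q, B x = some p → B' x = some q → VEq p q)

theorem Taint.lub_eq_S {a b : Taint} : a.lub b = .S ↔ a = .S ∧ b = .S := by
  cases a <;> cases b <;> simp [Taint.lub]

theorem VEq.op (f : ℕ → ℕ → ℕ) {v₁ v₂ w₁ w₂ : ℕ} {σ₁ σ₂ τ₁ τ₂ : Taint}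
    (h₁ : VEq (v₁, σ₁) (w₁, τ₁)) (h₂ : VEq (v₂, σ₂) (w₂, τ₂)) :
    VEq (f v₁ v₂, σ₁.lub σ₂) (f w₁ w₂, τ₁.lub τ₂) := by
  obtain ⟨hσ₁ : σ₁ = τ₁, hv₁⟩ := h₁
  obtain ⟨hσ₂ : σ₂ = τ₂, hv₂⟩ := h₂
  subst hσ₁ hσ₂
  refine ⟨rfl, fun hS => ?_⟩
  obtain ⟨hS₁, hS₂⟩ := Taint.lub_eq_S.mp hS
  exact congrArg₂ f (hv₁ hS₁) (hv₂ hS₂)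

/-- Evaluating the same expression in safe-equivalent bindings yields
safe-equivalent results. -/
theorem eval_veq (B B' : Bnd) (e : Expr) (p q : TVal)
    (hB : BEq' B B') (hp : Eval B e p) (hq : Eval B' e q) :
    VEq p q := by
  induction hp generalizing q with
  | const => cases hq; exact ⟨rfl, fun _ => rfl⟩
  | var x p hx => cases hq with | var _ _ hx' => exact hB.2 x p q hx hx'
  | op f e₁ e₂ v₁ v₂ σ₁ σ₂ _ _ ih₁ ih₂ =>
    cases hq with | op _ _ _ w₁ w₂ τ₁ τ₂ k₁ k₂ => exact (ih₁ _ k₁).op f (ih₂ _ k₂)
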